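/- The phragmén-STV rule satisfies PJR: for every approval-based multi-winner election, the committee W of size k produced by phragmén-STV provides proportional justified representation, regardless of how ties among candidates with maximal remaining support are broken. -/

import Mathlib

open Finset

variable {C : Type*} [Fintype C] [DecidableEq C]

/-- The voters approving candidate `c`. -/
def approvers {n : ℕ} (A : Fin n → Finset C) (c : C) : Finset (Fin n) :=
  Finset.univ.filter (fun i => c ∈ A i)

/-- The exact quota `q = n / k`. -/
def quota (n k : ℕ) : ℚ := (n : ℚ) / (k : ℚ)

/-- Remaining support of candidate `c` under vote fractions `f`. -/
def supp {n : ℕ} (A : Fin n → Finset C) (f : Fin n → ℚ) (c : C) : ℚ :=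
  ∑ i ∈ approvers A c, f i

/-- The set `W_j = {w_1, …, w_j}` of the first `j` winners. -/
def Wset (w : ℕ → C) (j : ℕ) : Finset C := (Finset.Icc 1 j).image w

/-- The candidates approved by every voter in `Ns`, i.e. `⋂_{i ∈ Ns} A i`. -/
def commonApproved {n : ℕ} (A : Fin n → Finset C) (Ns : Finset (Fin n)) : Finset C :=
  Finset.univ.filter (fun c => ∀ i ∈ Ns, c ∈ A i)

/-- `Ns` is an `ℓ`-cohesive group of voters: `|Ns| ≥ ℓ·n/k` and `|⋂_{i ∈ Ns} A i| ≥ ℓ`. -/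
def Cohesive {n : ℕ} (A : Fin n → Finset C) (k ℓ : ℕ) (Ns : Finset (Fin n)) : Prop :=
  (ℓ : ℚ) * (n : ℚ) / (k : ℚ) ≤ (Ns.card : ℚ) ∧ ℓ ≤ (commonApproved A Ns).card

/-- `W` provides proportional justified representation for `(A, k)`. -/
def ProvidesPJR {n : ℕ} (A : Fin n → Finset C) (k : ℕ) (W : Finset C) : Prop :=
  ∀ ℓ : ℕ, 1 ≤ ℓ → ℓ ≤ k → ∀ Ns : Finset (Fin n), Cohesive A k ℓ Ns →
    ℓ ≤ (W ∩ Ns.biUnion A).card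

/-- `W` provides extended justified representation for `(A, k)`. -/
def ProvidesEJR {n : ℕ} (A : Fin n → Finset C) (k : ℕ) (W : Finset C) : Prop :=
  ∀ ℓ : ℕ, 1 ≤ ℓ → ℓ ≤ k → ∀ Ns : Finset (Fin n), Cohesive A k ℓ Ns →
    ∃ i ∈ Ns, ℓ ≤ (A i ∩ W).card

/-- The set of `ℓ`'s satisfying the dissatisfaction-level fixpoint equation
`ℓ = ⌊(k/n)·|{i : c ∈ A_i ∧ |A_i ∩ W| < ℓ}|⌋`
(natural-number division `k * m / n` is exactly the floor `⌊(k/n)·m⌋`). -/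
def dissatSet {n : ℕ} (A : Fin n → Finset C) (k : ℕ) (W : Finset C) (c : C) : Set ℕ :=
  {ℓ : ℕ | ℓ = k * (Finset.univ.filter (fun i => c ∈ A i ∧ (A i ∩ W).card < ℓ)).card / n}

/-- The dissatisfaction level `ℓ(c, W)`: the largest non-negative integer satisfying
the fixpoint equation. -/
noncomputable def dissat {n : ℕ} (A : Fin n → Finset C) (k : ℕ) (W : Finset C) (c : C) : ℕ :=
  sSup (dissatSet A k W c)

/-- `ℓ_W(i, c) = max_{c' ∈ A_i \ (W ∪ {c})} ℓ(c', W)` (with `max ∅ = 0`). -/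
noncomputable def dissatVoter {n : ℕ} (A : Fin n → Finset C) (k : ℕ) (W : Finset C)
    (i : Fin n) (c : C) : ℕ :=
  (A i \ insert c W).sup (dissat A k W)

/-- `ℓ_W(i) = max_{c ∈ A_i \ W} ℓ(c, W)` (with `max ∅ = 0`). -/
noncomputable def dissatVoterAll {n : ℕ} (A : Fin n → Finset C) (k : ℕ) (W : Finset C)
    (i : Fin n) : ℕ :=
  (A i \ W).sup (dissat A k W)

/-- `g_i(c)` relative to the committee `W`. -/
noncomputable def gfun {n : ℕ} (A : Fin n → Finset C) (k : ℕ) (W : Finset C)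
    (i : Fin n) (c : C) : ℚ :=
  if dissatVoter A k W i c ≤ (A i ∩ W).card then 0
  else ((dissatVoter A k W i c : ℚ) - ((A i ∩ W).card : ℚ) - 1) / (dissatVoter A k W i c : ℚ)

/-- Candidate `c ∉ W` is in a normal state (w.r.t. committee `W` and fractions `f`). -/
def NormalState {n : ℕ} (A : Fin n → Finset C) (k : ℕ) (f : Fin n → ℚ) (W : Finset C)
    (c : C) : Prop :=
  (∀ i : Fin n, c ∈ A i → (A i ∩ W).card < dissatVoter A k W i c →
      ((dissatVoter A k W i c : ℚ) - ((A i ∩ W).card : ℚ)) / (dissatVoter A k W i c : ℚ) ≤ f i) ∧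
  quota n k ≤ ∑ i ∈ approvers A c, (f i - gfun A k W i c)

/-- Candidate `c ∉ W` is in a starving state. -/
def StarvingState {n : ℕ} (A : Fin n → Finset C) (k : ℕ) (f : Fin n → ℚ) (W : Finset C)
    (c : C) : Prop :=
  ∃ i : Fin n, c ∈ A i ∧ (A i ∩ W).card < dissatVoter A k W i c ∧
    f i < ((dissatVoter A k W i c : ℚ) - ((A i ∩ W).card : ℚ)) / (dissatVoter A k W i c : ℚ)

/-- Candidate `c ∉ W` is in an eager state. -/
def EagerState {n : ℕ} (A : Fin n → Finset C) (k : ℕ) (f : Fin n → ℚ) (W : Finset C)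
    (c : C) : Prop :=
  ¬ StarvingState A k f W c ∧ quota n k ≤ supp A f c ∧
    ∑ i ∈ approvers A c, (f i - gfun A k W i c) < quota n k

/-- A run of a voting rule in the PJR-Exact family: a sequence of distinct winners
`w 1, …, w k` together with fraction functions `f 0, …, f k` satisfying the three
defining conditions of the family. -/
structure PJRExactRun (n k : ℕ) (A : Fin n → Finset C) where
  w : ℕ → C
  f : ℕ → Fin n → ℚ
  /-- the selected candidates are pairwise distinct -/
  w_inj : ∀ j j' : ℕ, 1 ≤ j → j ≤ k → 1 ≤ j' → j' ≤ k → w j = w j' → j = j'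
  /-- initially each voter has her whole vote -/
  f_zero : ∀ i, f 0 i = 1
  /-- fractions stay non-negative -/
  f_nonneg : ∀ j, 1 ≤ j → j ≤ k → ∀ i, 0 ≤ f j i
  /-- fractions never increase -/
  f_mono : ∀ j, 1 ≤ j → j ≤ k → ∀ i, f j i ≤ f (j - 1) i
  /-- if the remaining support of the winner exceeds the quota, exactly `q` votes are removed -/
  remove_big : ∀ j, 1 ≤ j → j ≤ k → quota n k < supp A (f (j - 1)) (w j) →
    ∑ i ∈ approvers A (w j), (f (j - 1) i - f j i) = quota n k
  /-- if the remaining support of the winner is at most the quota, all of it is removed -/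
  remove_small : ∀ j, 1 ≤ j → j ≤ k → supp A (f (j - 1)) (w j) ≤ quota n k →
    ∀ i, w j ∈ A i → f j i = 0
  /-- voters not approving the winner keep their fractions -/
  f_untouched : ∀ j, 1 ≤ j → j ≤ k → ∀ i, w j ∉ A i → f j i = f (j - 1) i
  /-- if some unelected candidate has remaining support at least `q`,
  then so has the selected one -/
  greedy : ∀ j, 1 ≤ j → j ≤ k →
    (∃ c, c ∉ Wset w (j - 1) ∧ quota n k ≤ supp A (f (j - 1)) c) →
    quota n k ≤ supp A (f (j - 1)) (w j)

/-- Iteration `j` of a PJR-Exact run is normal. -/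
def NormalIteration {n k : ℕ} {A : Fin n → Finset C} (R : PJRExactRun n k A) (j : ℕ) : Prop :=
  NormalState A k (R.f (j - 1)) (Wset R.w (j - 1)) (R.w j) ∧
  ∀ i : Fin n, R.w j ∈ A i →
    (A i ∩ Wset R.w (j - 1)).card < dissatVoter A k (Wset R.w (j - 1)) i (R.w j) →
    ((dissatVoter A k (Wset R.w (j - 1)) i (R.w j) : ℚ) - ((A i ∩ Wset R.w j).card : ℚ)) /
      (dissatVoter A k (Wset R.w (j - 1)) i (R.w j) : ℚ) ≤ R.f j i

/-- A run of the phragmén-STV rule (any tie-breaking among candidates with maximal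
remaining support is allowed). -/
structure PhragmenSTVRun (n k : ℕ) (A : Fin n → Finset C) where
  w : ℕ → C
  f : ℕ → Fin n → ℚ
  f_zero : ∀ i, f 0 i = 1
  /-- the winner of each round has not been elected before -/
  w_new : ∀ j, 1 ≤ j → j ≤ k → w j ∉ Wset w (j - 1)
  /-- the winner of each round has maximal remaining support -/
  w_max : ∀ j, 1 ≤ j → j ≤ k → ∀ c : C, c ∉ Wset w (j - 1) →
    supp A (f (j - 1)) c ≤ supp A (f (j - 1)) (w j)
  /-- voters not approving the winner keep their fractions -/
  f_untouched : ∀ j, 1 ≤ j → j ≤ k → ∀ i, w j ∉ A i → f j i = f (j - 1) i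
  /-- if the winner's support is at most the quota, supporters lose their whole fractions -/
  f_update_small : ∀ j, 1 ≤ j → j ≤ k → supp A (f (j - 1)) (w j) ≤ quota n k →
    ∀ i, w j ∈ A i → f j i = 0
  /-- otherwise the supporters' fractions are scaled down by `(s − q)/s` -/
  f_update_big : ∀ j, 1 ≤ j → j ≤ k → quota n k < supp A (f (j - 1)) (w j) →
    ∀ i, w j ∈ A i →
      f j i = f (j - 1) i * (supp A (f (j - 1)) (w j) - quota n k) / supp A (f (j - 1)) (w j)


/-!
Suppose a cohesive group `S` with `ℓ·q ≤ |S|` and a candidate `c` approved by all of `S` were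
represented by fewer than `ℓ` winners. Only rounds electing a candidate approved by some member
of `S` touch the votes of `S`, and each removes at most `q` of them, so `S` keeps at least
`ℓ·q − (ℓ − 1)·q = q` throughout. Then `c` always has support at least `q`, hence so does every
winner, so every round removes exactly `q` votes and all `k·q = n` votes are spent after `k`
rounds, while `S` still holds `q > 0` of them.
-/

lemma quota_nonneg (n k : ℕ) : 0 ≤ quota n k := by
  unfold quota; positivity

lemma quota_pos {n k : ℕ} (hn : 0 < n) (hk : 0 < k) : 0 < quota n k := by
  unfold quota; positivity

lemma natCast_mul_quota {n k : ℕ} (hk : k ≠ 0) : (k : ℚ) * quota n k = n := by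
  unfold quota; field_simp

lemma Wset_succ {C : Type*} [DecidableEq C] (w : ℕ → C) (j : ℕ) :
    Wset w (j + 1) = insert (w (j + 1)) (Wset w j) := by
  rw [Wset, Wset, ← Finset.insert_Icc_right_eq_Icc_add_one (by omega), image_insert]

lemma Wset_mono {C : Type*} [DecidableEq C] (w : ℕ → C) {j j' : ℕ} (h : j ≤ j') :
    Wset w j ⊆ Wset w j' :=
  image_subset_image (Icc_subset_Icc_right h)

lemma exists_mem_commonApproved_notMem {n : ℕ} {A : Fin n → Finset C} {S : Finset (Fin n)}
    {W : Finset C} (hS : S.Nonempty) (h : (W ∩ S.biUnion A).card < (commonApproved A S).card) :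
    ∃ c ∈ commonApproved A S, c ∉ W := by
  by_contra! hsub
  refine h.not_ge (card_le_card fun c hc => mem_inter.2 ⟨hsub c hc, ?_⟩)
  obtain ⟨i, hi⟩ := hS
  exact mem_biUnion.2 ⟨i, hi, (mem_filter.1 hc).2 i hi⟩

namespace PhragmenSTVRun

variable {C : Type*} [DecidableEq C] {n k : ℕ} {A : Fin n → Finset C} (R : PhragmenSTVRun n k A)

lemma f_succ_of_notMem {j : ℕ} (hj : j + 1 ≤ k) {i : Fin n} (hi : R.w (j + 1) ∉ A i) :
    R.f (j + 1) i = R.f j i :=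
  R.f_untouched (j + 1) (by omega) hj i hi

lemma f_succ_of_le_quota {j : ℕ} (hj : j + 1 ≤ k)
    (hs : supp A (R.f j) (R.w (j + 1)) ≤ quota n k) {i : Fin n} (hi : R.w (j + 1) ∈ A i) :
    R.f (j + 1) i = 0 :=
  R.f_update_small (j + 1) (by omega) hj hs i hi

lemma f_succ_of_quota_lt {j : ℕ} (hj : j + 1 ≤ k)
    (hs : quota n k < supp A (R.f j) (R.w (j + 1))) {i : Fin n} (hi : R.w (j + 1) ∈ A i) :
    R.f (j + 1) i =
      R.f j i * (supp A (R.f j) (R.w (j + 1)) - quota n k) / supp A (R.f j) (R.w (j + 1)) :=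
  R.f_update_big (j + 1) (by omega) hj hs i hi

lemma f_nonneg : ∀ j ≤ k, ∀ i, 0 ≤ R.f j i := by
  intro j
  induction j with
  | zero => intro _ i; simp [R.f_zero]
  | succ j ih =>
    intro hj i
    have hf := ih (by omega) i
    by_cases hi : R.w (j + 1) ∈ A i
    · by_cases hs : supp A (R.f j) (R.w (j + 1)) ≤ quota n k
      · exact (R.f_succ_of_le_quota hj hs hi).ge
      · push Not at hs
        rw [R.f_succ_of_quota_lt hj hs hi]
        exact div_nonneg (mul_nonneg hf (by linarith)) (by linarith [quota_nonneg n k])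
    · rwa [R.f_succ_of_notMem hj hi]

lemma f_succ_le {j : ℕ} (hj : j + 1 ≤ k) (i : Fin n) : R.f (j + 1) i ≤ R.f j i := by
  have hf := R.f_nonneg j (by omega) i
  by_cases hi : R.w (j + 1) ∈ A i
  · by_cases hs : supp A (R.f j) (R.w (j + 1)) ≤ quota n k
    · rwa [R.f_succ_of_le_quota hj hs hi]
    · push Not at hs
      rw [R.f_succ_of_quota_lt hj hs hi, div_le_iff₀ (by linarith [quota_nonneg n k])]
      nlinarith [quota_nonneg n k]
  · rw [R.f_succ_of_notMem hj hi]

lemma sum_sub_f_succ {j : ℕ} (hj : j + 1 ≤ k) :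
    ∑ i, (R.f j i - R.f (j + 1) i) = min (supp A (R.f j) (R.w (j + 1))) (quota n k) := by
  set s := supp A (R.f j) (R.w (j + 1))
  have hsum : ∑ i, (R.f j i - R.f (j + 1) i) = ∑ i ∈ approvers A (R.w (j + 1)),
      (R.f j i - R.f (j + 1) i) := by
    refine (sum_filter_of_ne fun i _ hne => ?_).symm
    by_contra hi
    exact hne (by rw [R.f_succ_of_notMem hj hi, sub_self])
  rw [hsum]
  by_cases hs : s ≤ quota n k
  · rw [min_eq_left hs]
    refine sum_congr rfl fun i hi => ?_
    rw [R.f_succ_of_le_quota hj hs (mem_filter.1 hi).2, sub_zero]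
  · push Not at hs
    have hs0 : s ≠ 0 := (hs.trans_le' (quota_nonneg n k)).ne'
    have hloss : ∀ i ∈ approvers A (R.w (j + 1)),
        R.f j i - R.f (j + 1) i = R.f j i * (quota n k / s) := by
      intro i hi
      rw [R.f_succ_of_quota_lt hj hs (mem_filter.1 hi).2]
      change R.f j i - R.f j i * (s - quota n k) / s = _
      field_simp
      ring
    rw [min_eq_right hs.le, sum_congr rfl hloss, ← sum_mul]
    change s * (quota n k / s) = quota n k
    field_simp

lemma sum_f_eq_of_quota_le_supp
    (hwin : ∀ j, j + 1 ≤ k → quota n k ≤ supp A (R.f j) (R.w (j + 1))) :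
    ∀ j ≤ k, ∑ i, R.f j i = n - j * quota n k := by
  intro j
  induction j with
  | zero => intro _; simp [R.f_zero]
  | succ j ih =>
    intro hj
    have hstep := R.sum_sub_f_succ hj
    rw [min_eq_right (hwin j hj), sum_sub_distrib] at hstep
    have := ih (by omega)
    push_cast
    linarith

lemma sum_sub_f_succ_le {j : ℕ} (hj : j + 1 ≤ k) (S : Finset (Fin n)) :
    ∑ i ∈ S, (R.f j i - R.f (j + 1) i) ≤ quota n k :=
  calc ∑ i ∈ S, (R.f j i - R.f (j + 1) i)
      ≤ ∑ i, (R.f j i - R.f (j + 1) i) :=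
        sum_le_sum_of_subset_of_nonneg (subset_univ S) fun i _ _ => sub_nonneg.2 (R.f_succ_le hj i)
    _ ≤ quota n k := R.sum_sub_f_succ hj ▸ min_le_right _ _

lemma card_sub_mul_quota_le_sum_f (S : Finset (Fin n)) :
    ∀ j ≤ k, (S.card : ℚ) - (Wset R.w j ∩ S.biUnion A).card * quota n k ≤ ∑ i ∈ S, R.f j i := by
  intro j
  induction j with
  | zero => intro _; simp [Wset, R.f_zero]
  | succ j ih =>
    intro hj
    have ih := ih (by omega)
    have hnew : R.w (j + 1) ∉ Wset R.w j := R.w_new (j + 1) (by omega) hj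
    rw [Wset_succ]
    by_cases hX : R.w (j + 1) ∈ S.biUnion A
    · have hloss := R.sum_sub_f_succ_le hj S
      rw [sum_sub_distrib] at hloss
      rw [insert_inter_of_mem hX, card_insert_of_notMem fun h => hnew (mem_inter.1 h).1]
      push_cast
      linarith
    · rw [insert_inter_of_notMem hX,
        sum_congr rfl fun i hi => R.f_succ_of_notMem hj fun h => hX (mem_biUnion.2 ⟨i, hi, h⟩)]
      exact ih

lemma quota_le_sum_f {S : Finset (Fin n)} {ℓ : ℕ} (hS : ℓ * quota n k ≤ S.card)
    (hfew : (Wset R.w k ∩ S.biUnion A).card < ℓ) {j : ℕ} (hj : j ≤ k) :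
    quota n k ≤ ∑ i ∈ S, R.f j i := by
  have hT : (Wset R.w j ∩ S.biUnion A).card + 1 ≤ ℓ :=
    (card_le_card (inter_subset_inter_right (Wset_mono R.w hj))).trans_lt hfew
  have hTq : ((Wset R.w j ∩ S.biUnion A).card + 1 : ℚ) ≤ ℓ := by exact_mod_cast hT
  have := R.card_sub_mul_quota_le_sum_f S j hj
  nlinarith [quota_nonneg n k]

lemma sum_f_le_supp {S : Finset (Fin n)} {c : C} (hS : ∀ i ∈ S, c ∈ A i) {j : ℕ} (hj : j ≤ k) :
    ∑ i ∈ S, R.f j i ≤ supp A (R.f j) c :=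
  sum_le_sum_of_subset_of_nonneg (fun i hi => mem_filter.2 ⟨mem_univ i, hS i hi⟩)
    fun i _ _ => R.f_nonneg j hj i

lemma supp_le_supp_w_succ {c : C} (hc : c ∉ Wset R.w k) {j : ℕ} (hj : j + 1 ≤ k) :
    supp A (R.f j) c ≤ supp A (R.f j) (R.w (j + 1)) :=
  R.w_max (j + 1) (by omega) hj c fun h => hc (Wset_mono R.w (by omega) h)

end PhragmenSTVRun

theorem phragmenSTV_satisfies_PJR_general {C : Type*} [Fintype C] [DecidableEq C] {n k : ℕ}
    (hn : 0 < n)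
    (A : Fin n → Finset C) (R : PhragmenSTVRun n k A) :
    ProvidesPJR A k (Wset R.w k) := by
  intro ℓ hℓ hℓk S ⟨hS, hcommon⟩
  by_contra! hfew
  have hq : 0 < quota n k := quota_pos hn (by omega)
  rw [mul_div_assoc] at hS
  have hSq : ∀ j ≤ k, quota n k ≤ ∑ i ∈ S, R.f j i := fun j hj => R.quota_le_sum_f hS hfew hj
  have hSne : S.Nonempty :=
    card_pos.1 (by exact_mod_cast (by positivity : (0 : ℚ) < ℓ * quota n k).trans_le hS)
  obtain ⟨c, hc, hcW⟩ := exists_mem_commonApproved_notMem hSne (hfew.trans_le hcommon)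
  have hwin : ∀ j, j + 1 ≤ k → quota n k ≤ supp A (R.f j) (R.w (j + 1)) := fun j hj =>
    (hSq j (by omega)).trans <|
      (R.sum_f_le_supp (mem_filter.1 hc).2 (by omega)).trans (R.supp_le_supp_w_succ hcW hj)
  have hspent : ∑ i, R.f k i = 0 := by
    rw [R.sum_f_eq_of_quota_le_supp hwin k le_rfl, natCast_mul_quota (by omega), sub_self]
  have hle : ∑ i ∈ S, R.f k i ≤ ∑ i, R.f k i :=
    sum_le_sum_of_subset_of_nonneg (subset_univ S) fun i _ _ => R.f_nonneg k le_rfl i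
  linarith [hSq k le_rfl]

/-- phragmén-STV satisfies PJR, regardless of tie-breaking. -/
theorem phragmenSTV_satisfies_PJR {C : Type*} [Fintype C] [DecidableEq C] {n k : ℕ}
    (hn : 0 < n) (hk : 1 ≤ k) (hkC : k ≤ Fintype.card C)
    (A : Fin n → Finset C) (R : PhragmenSTVRun n k A) :
    ProvidesPJR A k (Wset R.w k) :=
  phragmenSTV_satisfies_PJR_general hn A R
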